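/- arXiv:2512.15530 — 3 statements merged into one kernel-verified Lean document; each statement's English description precedes it below -/
import Mathlib

section
/- Let X̃ be a smooth compact manifold with metric d and let Φ, Φ̂ ∈ Diff¹(X̃) be topologically conjugate by a homeomorphism g : X̃ → X̃, i.e. g ∘ Φ = Φ̂ ∘ g. Let (U, d_U) be a separable metric space, let h, ĥ : X̃ → U be continuous, and let d_{P,U} be a metric metrizing the weak topology on P(U). Let ξ be a mixing Borel probability measure for Φ, let ξ₀ be a Borel probability measure absolutely continuous with respect to ξ, and suppose g⁻¹ is nonsingular with respect to ξ. Then limsup_{t→∞} d_{P,U}(h_*Φ^{t-1}_*ξ₀, ĥ_*Φ̂^{t-1}_*ξ₀) ≤ d_{P,U}(h_*ξ, ĥ_*ξ) + d_{P,U}(ĥ_*ξ, ĥ_*g_*ξ). -/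
/-!
Mixing of `ξ` means that the indicators `1_A ∘ Φ^t` converge to the constant `ξ(A)` when tested
against indicators `1_B`; since these tests are uniformly `L¹`-Lipschitz and span a dense
subspace, they converge when tested against any `L¹(ξ)` density. So every `ξ₀ ≪ ξ` satisfies
`Φ^t_* ξ₀ (A) → ξ(A)` for all Borel `A`, and pushed forward by a measurable readout this setwise
convergence gives weak convergence. The conjugacy writes `Φ̂^t_* ξ₀` as `g_* Φ^t_* (g⁻¹_* ξ₀)`, where
`g⁻¹_* ξ₀ ≪ ξ` by nonsingularity, so `ĥ_* Φ̂^t_* ξ₀ → ĥ_* g_* ξ` while `h_* Φ^t_* ξ₀ → h_* ξ`.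
The distances therefore converge to `d(h_* ξ, ĥ_* g_* ξ)`, and one triangle inequality concludes.
-/

open MeasureTheory Filter Topology ENNReal

noncomputable section

def pushPM {α β : Type*} [MeasurableSpace α] [MeasurableSpace β]
    (f : α → β) (hf : Measurable f) (ν : ProbabilityMeasure α) : ProbabilityMeasure β :=
  ⟨(ν : Measure α).map f, Measure.isProbabilityMeasure_map hf.aemeasurable⟩

def IsMixingM {α : Type*} [MeasurableSpace α] (f : α → α) (μ : Measure α) : Prop :=
  μ.map f = μ ∧ ∀ A B : Set α, MeasurableSet A → MeasurableSet B →
    Tendsto (fun t : ℕ => μ (f^[t] ⁻¹' A ∩ B)) atTop (𝓝 (μ A * μ B))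

theorem toMeasure_pushPM {α β : Type*} [MeasurableSpace α] [MeasurableSpace β] {f : α → β}
    (hf : Measurable f) (ν : ProbabilityMeasure α) : (pushPM f hf ν : Measure β) = (ν : Measure α).map f :=
  rfl

theorem pushPM_apply {α β : Type*} [MeasurableSpace α] [MeasurableSpace β] {f : α → β}
    (hf : Measurable f) (ν : ProbabilityMeasure α) {s : Set β} (hs : MeasurableSet s) :
    (pushPM f hf ν : Measure β) s = (ν : Measure α) (f ⁻¹' s) :=
  Measure.map_apply hf hs

theorem MeasureTheory.ProbabilityMeasure.tendsto_of_forall_measure_tendsto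
    {Ω ι : Type*} [MeasurableSpace Ω] [TopologicalSpace Ω] [OpensMeasurableSpace Ω]
    {L : Filter ι} [L.IsCountablyGenerated] [L.NeBot] {μs : ι → ProbabilityMeasure Ω}
    {μ : ProbabilityMeasure Ω}
    (h : ∀ s, MeasurableSet s →
      Tendsto (fun i => (μs i : Measure Ω) s) L (𝓝 ((μ : Measure Ω) s))) :
    Tendsto μs L (𝓝 μ) :=
  tendsto_of_forall_isOpen_le_liminf' fun G hG => (h G hG.measurableSet).liminf_eq.ge

section Mixing

variable {α : Type*} [MeasurableSpace α]

theorem MeasureTheory.L1.lipschitzWith_setIntegral {μ : Measure α} (S : Set α) :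
    LipschitzWith 1 (fun f : α →₁[μ] ℝ => ∫ x in S, f x ∂μ) := by
  refine LipschitzWith.of_dist_le_mul fun f g => ?_
  have hf := L1.integrable_coeFn f
  have hg := L1.integrable_coeFn g
  calc dist (∫ x in S, f x ∂μ) (∫ x in S, g x ∂μ) = ‖∫ x in S, (f x - g x) ∂μ‖ := by
        rw [dist_eq_norm, ← MeasureTheory.integral_sub hf.integrableOn hg.integrableOn]
    _ ≤ ∫ x in S, ‖f x - g x‖ ∂μ := norm_integral_le_integral_norm _
    _ ≤ ∫ x, ‖f x - g x‖ ∂μ :=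
        setIntegral_le_integral (hf.sub hg).norm (.of_forall fun _ => norm_nonneg _)
    _ = 1 * dist f g := by simp_rw [one_mul, L1.dist_eq_integral_dist, dist_eq_norm]

theorem tendsto_setIntegral_preimage_iterate_of_mixing {μ : Measure α} [IsFiniteMeasure μ]
    {T : α → α} {A : Set α}
    (hmix : ∀ B, MeasurableSet B →
      Tendsto (fun t : ℕ => μ (T^[t] ⁻¹' A ∩ B)) atTop (𝓝 (μ A * μ B)))
    {f : α → ℝ} (hf : Integrable f μ) :
    Tendsto (fun t : ℕ => ∫ x in T^[t] ⁻¹' A, f x ∂μ) atTop (𝓝 (μ.real A * ∫ x, f x ∂μ)) := by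
  refine Integrable.induction
    (fun f => Tendsto (fun t : ℕ => ∫ x in T^[t] ⁻¹' A, f x ∂μ) atTop
      (𝓝 (μ.real A * ∫ x, f x ∂μ))) ?indicator ?add ?closed ?ae hf
  case indicator =>
    intro c B hB _
    have hmixReal : Tendsto (fun t : ℕ => μ.real (T^[t] ⁻¹' A ∩ B)) atTop
        (𝓝 (μ.real A * μ.real B)) := by
      rw [measureReal_def, measureReal_def, ← ENNReal.toReal_mul]
      exact (ENNReal.tendsto_toReal (by finiteness)).comp (hmix B hB)
    simp_rw [integral_indicator_const c hB, measureReal_restrict_apply hB, Set.inter_comm B,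
      smul_eq_mul, ← mul_assoc]
    exact hmixReal.mul_const c
  case add =>
    intro f g _ hf hg hfP hgP
    simp_rw [Pi.add_apply, integral_add hf.integrableOn hg.integrableOn, integral_add hf hg,
      mul_add]
    exact hfP.add hgP
  case closed =>
    exact ((LipschitzWith.uniformEquicontinuous _ 1 fun t =>
      L1.lipschitzWith_setIntegral _).equicontinuous).isClosed_setOfPred_tendsto
      (continuous_const.mul continuous_integral)
  case ae =>
    intro f g hfg _ hfP
    simp_rw [← integral_congr_ae hfg, ← integral_congr_ae (ae_restrict_of_ae hfg)]
    exact hfP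

theorem tendsto_measure_preimage_iterate_of_mixing {μ ν : Measure α} [IsProbabilityMeasure μ]
    [IsProbabilityMeasure ν] (hνμ : ν ≪ μ) {T : α → α} {A : Set α}
    (hmix : ∀ B, MeasurableSet B →
      Tendsto (fun t : ℕ => μ (T^[t] ⁻¹' A ∩ B)) atTop (𝓝 (μ A * μ B))) :
    Tendsto (fun t : ℕ => ν (T^[t] ⁻¹' A)) atTop (𝓝 (μ A)) := by
  rw [← ENNReal.tendsto_toReal_iff (fun _ => measure_ne_top _ _) (measure_ne_top _ _)]
  have hdensity := tendsto_setIntegral_preimage_iterate_of_mixing hmix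
    (Measure.integrable_toReal_rnDeriv (μ := ν) (ν := μ))
  rw [Measure.integral_toReal_rnDeriv hνμ, probReal_univ, mul_one] at hdensity
  simpa only [Measure.setIntegral_toReal_rnDeriv hνμ, measureReal_def] using hdensity

theorem tendsto_pushPM_iterate_of_mixing {U : Type*} [MeasurableSpace U] [TopologicalSpace U]
    [OpensMeasurableSpace U] {T : α → α} (hT : Measurable T) (ξ ν : ProbabilityMeasure α)
    (hmix : ∀ A B : Set α, MeasurableSet A → MeasurableSet B →
      Tendsto (fun t : ℕ => (ξ : Measure α) (T^[t] ⁻¹' A ∩ B)) atTop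
        (𝓝 ((ξ : Measure α) A * (ξ : Measure α) B)))
    (hνξ : (ν : Measure α) ≪ ξ) {r : α → U} (hr : Measurable r) :
    Tendsto (fun t : ℕ => pushPM r hr (pushPM T^[t] (hT.iterate t) ν)) atTop
      (𝓝 (pushPM r hr ξ)) := by
  refine ProbabilityMeasure.tendsto_of_forall_measure_tendsto fun s hs => ?_
  simp only [pushPM_apply, hs, hr hs]
  exact tendsto_measure_preimage_iterate_of_mixing hνξ (hmix _ · (hr hs))

theorem MeasureTheory.Measure.map_iterate_eq_of_semiconj {β : Type*} [MeasurableSpace β]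
    (e : α ≃ᵐ β) {S : α → α} {T : β → β} (hS : Measurable S) (h : Function.Semiconj e S T)
    (ν : Measure β) (n : ℕ) :
    ν.map T^[n] = ((ν.map e.symm).map S^[n]).map e := by
  rw [Measure.map_map (hS.iterate n) e.symm.measurable,
    Measure.map_map e.measurable ((hS.iterate n).comp e.symm.measurable)]
  congr 1
  funext x
  simp [(h.iterate_right n).eq]

end Mixing

section DistanceFunction

variable {X : Type*} {d : X → X → ℝ}

theorem nonneg_of_triangle (hsymm : ∀ a b, d a b = d b a)
    (htri : ∀ a b c, d a c ≤ d a b + d b c) (hself : ∀ a, d a a = 0) (a b : X) :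
    0 ≤ d a b := by
  linarith [htri a b a, hsymm a b, hself a]

theorem tendsto_dist_zero_of_tendsto [TopologicalSpace X] (hsymm : ∀ a b, d a b = d b a)
    (htri : ∀ a b c, d a c ≤ d a b + d b c) (hself : ∀ a, d a a = 0)
    (htop : ∀ s : Set X, IsOpen s ↔ ∀ a ∈ s, ∃ ε > (0 : ℝ), ∀ b, d a b < ε → b ∈ s)
    {ι : Type*} {l : Filter ι} {a : ι → X} {A : X} (ha : Tendsto a l (𝓝 A)) :
    Tendsto (fun i => d A (a i)) l (𝓝 0) := by
  have hball : ∀ ε, IsOpen {b | d A b < ε} := fun ε =>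
    (htop _).2 fun b (hb : d A b < ε) => ⟨ε - d A b, sub_pos.2 hb, fun c hc =>
      show d A c < ε by linarith [htri A b c]⟩
  refine tendsto_order.2 ⟨fun e he => .of_forall fun i => ?_, fun ε hε => ?_⟩
  · exact he.trans_le (nonneg_of_triangle hsymm htri hself _ _)
  · exact ha.eventually ((hball ε).eventually_mem (by simpa [hself] using hε))

theorem tendsto_dist_of_tendsto [TopologicalSpace X] (hsymm : ∀ a b, d a b = d b a)
    (htri : ∀ a b c, d a c ≤ d a b + d b c) (hself : ∀ a, d a a = 0)
    (htop : ∀ s : Set X, IsOpen s ↔ ∀ a ∈ s, ∃ ε > (0 : ℝ), ∀ b, d a b < ε → b ∈ s)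
    {ι : Type*} {l : Filter ι} {a b : ι → X} {A B : X} (ha : Tendsto a l (𝓝 A))
    (hb : Tendsto b l (𝓝 B)) :
    Tendsto (fun i => d (a i) (b i)) l (𝓝 (d A B)) := by
  have herr : Tendsto (fun i => d A (a i) + d B (b i)) l (𝓝 0) := by
    simpa using (tendsto_dist_zero_of_tendsto hsymm htri hself htop ha).add
      (tendsto_dist_zero_of_tendsto hsymm htri hself htop hb)
  refine tendsto_of_tendsto_of_tendsto_of_le_of_le (by simpa using tendsto_const_nhds.sub herr)
    (by simpa using tendsto_const_nhds.add herr) (fun i => ?_) (fun i => ?_)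
  · linarith [htri A (a i) B, htri (a i) (b i) B, hsymm B (b i)]
  · linarith [htri (a i) A (b i), htri A B (b i), hsymm A (a i)]

end DistanceFunction

theorem statement8_general
    {Xt : Type*} [MetricSpace Xt] [MeasurableSpace Xt] [BorelSpace Xt]
    {U : Type*} [MetricSpace U] [MeasurableSpace U] [BorelSpace U]
    -- `Φ, Φ̂ ∈ Diff¹(X̃)`, conjugate by the homeomorphism `g`:
    (Φ Φh g : Xt ≃ₜ Xt)
    (hconj : ∀ x, g (Φ x) = Φh (g x))
    -- continuous readouts:
    (h hh : Xt → U) (hhc : Continuous h) (hhhc : Continuous hh)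
    -- `dPU` is a metric on `P(U)` metrizing the weak topology:
    (dPU : ProbabilityMeasure U → ProbabilityMeasure U → ℝ)
    (hdP_symm : ∀ a b, dPU a b = dPU b a)
    (hdP_tri : ∀ a b c, dPU a c ≤ dPU a b + dPU b c)
    (hdP_eq : ∀ a b, dPU a b = 0 ↔ a = b)
    (hdP_top : ∀ s : Set (ProbabilityMeasure U),
      IsOpen s ↔ ∀ a ∈ s, ∃ ε > (0 : ℝ), ∀ b, dPU a b < ε → b ∈ s)
    -- `ξ` mixing for `Φ`, `ξ₀ ≪ ξ`, `g⁻¹` nonsingular w.r.t. `ξ`: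
    (ξ ξ₀ : ProbabilityMeasure Xt)
    (hmix : IsMixingM ⇑Φ (ξ : Measure Xt))
    (habs : (ξ₀ : Measure Xt) ≪ (ξ : Measure Xt))
    (hns : (ξ : Measure Xt).map ⇑g.symm ≪ (ξ : Measure Xt)) :
    Filter.limsup
      (fun t : ℕ => dPU
        (pushPM h hhc.measurable
          (pushPM (⇑Φ)^[t] (Φ.continuous.measurable.iterate t) ξ₀))
        (pushPM hh hhhc.measurable
          (pushPM (⇑Φh)^[t] (Φh.continuous.measurable.iterate t) ξ₀)))
      atTop
      ≤ dPU (pushPM h hhc.measurable ξ) (pushPM hh hhhc.measurable ξ) +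
        dPU (pushPM hh hhhc.measurable ξ)
          (pushPM hh hhhc.measurable (pushPM ⇑g g.continuous.measurable ξ)) := by
  have hΦ : Measurable Φ := Φ.continuous.measurable
  set ν := pushPM g.symm g.symm.continuous.measurable ξ₀
  have hν : (ν : Measure Xt) ≪ ξ := (habs.map g.symm.continuous.measurable).trans hns
  have hconv : Tendsto (fun t : ℕ => pushPM h hhc.measurable (pushPM Φ^[t] (hΦ.iterate t) ξ₀))
      atTop (𝓝 (pushPM h hhc.measurable ξ)) :=
    tendsto_pushPM_iterate_of_mixing hΦ ξ ξ₀ hmix.2 habs hhc.measurable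
  have hconvh : Tendsto (fun t : ℕ =>
        pushPM hh hhhc.measurable (pushPM Φh^[t] (Φh.continuous.measurable.iterate t) ξ₀))
      atTop (𝓝 (pushPM hh hhhc.measurable (pushPM g g.continuous.measurable ξ))) := by
    convert tendsto_pushPM_iterate_of_mixing hΦ ξ ν hmix.2 hν
      (hhhc.measurable.comp g.continuous.measurable) using 2 with t
    · refine ProbabilityMeasure.toMeasure_injective ?_
      simp only [toMeasure_pushPM, ν]
      rw [Measure.map_iterate_eq_of_semiconj g.toMeasurableEquiv hΦ hconj,
        Measure.map_map hhhc.measurable g.toMeasurableEquiv.measurable]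
      rfl
    · exact ProbabilityMeasure.toMeasure_injective
        (Measure.map_map hhhc.measurable g.continuous.measurable)
  rw [(tendsto_dist_of_tendsto hdP_symm hdP_tri (fun a => (hdP_eq a a).2 rfl) hdP_top hconv
    hconvh).limsup_eq]
  exact hdP_tri _ _ _

/-- Time-uniform density-forecast bound in the observation space for a mixing
measure `ξ` of the state-space dynamics `Φ`, with conjugate proxy dynamics `Φ̂` and readouts
`h, ĥ`. -/
theorem statement8 {E : Type*} [NormedAddCommGroup E] [NormedSpace ℝ E]
    {H : Type*} [TopologicalSpace H] (I : ModelWithCorners ℝ E H)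
    {Xt : Type*} [MetricSpace Xt] [CompactSpace Xt] [ChartedSpace H Xt]
    [IsManifold I ((⊤ : ℕ∞) : WithTop ℕ∞) Xt] [MeasurableSpace Xt] [BorelSpace Xt]
    {U : Type*} [MetricSpace U] [TopologicalSpace.SeparableSpace U]
    [MeasurableSpace U] [BorelSpace U]
    -- `Φ, Φ̂ ∈ Diff¹(X̃)`, conjugate by the homeomorphism `g`:
    (Φ Φh g : Xt ≃ₜ Xt)
    (hΦ : ContMDiff I I 1 ⇑Φ) (hΦinv : ContMDiff I I 1 ⇑Φ.symm)
    (hΦh : ContMDiff I I 1 ⇑Φh) (hΦhinv : ContMDiff I I 1 ⇑Φh.symm)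
    (hconj : ∀ x, g (Φ x) = Φh (g x))
    -- continuous readouts:
    (h hh : Xt → U) (hhc : Continuous h) (hhhc : Continuous hh)
    -- `dPU` is a metric on `P(U)` metrizing the weak topology:
    (dPU : ProbabilityMeasure U → ProbabilityMeasure U → ℝ)
    (hdP_symm : ∀ a b, dPU a b = dPU b a)
    (hdP_tri : ∀ a b c, dPU a c ≤ dPU a b + dPU b c)
    (hdP_eq : ∀ a b, dPU a b = 0 ↔ a = b)
    (hdP_top : ∀ s : Set (ProbabilityMeasure U),
      IsOpen s ↔ ∀ a ∈ s, ∃ ε > (0 : ℝ), ∀ b, dPU a b < ε → b ∈ s)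
    -- `ξ` mixing for `Φ`, `ξ₀ ≪ ξ`, `g⁻¹` nonsingular w.r.t. `ξ`:
    (ξ ξ₀ : ProbabilityMeasure Xt)
    (hmix : IsMixingM ⇑Φ (ξ : Measure Xt))
    (habs : (ξ₀ : Measure Xt) ≪ (ξ : Measure Xt))
    (hns : (ξ : Measure Xt).map ⇑g.symm ≪ (ξ : Measure Xt)) :
    Filter.limsup
      (fun t : ℕ => dPU
        (pushPM h hhc.measurable
          (pushPM (⇑Φ)^[t] (Φ.continuous.measurable.iterate t) ξ₀))
        (pushPM hh hhhc.measurable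
          (pushPM (⇑Φh)^[t] (Φh.continuous.measurable.iterate t) ξ₀)))
      atTop
      ≤ dPU (pushPM h hhc.measurable ξ) (pushPM hh hhhc.measurable ξ) +
        dPU (pushPM hh hhhc.measurable ξ)
          (pushPM hh hhhc.measurable (pushPM ⇑g g.continuous.measurable ξ)) :=
  statement8_general Φ Φh g hconj h hh hhc hhhc dPU hdP_symm hdP_tri hdP_eq hdP_top ξ ξ₀ hmix habs
    hns
end
end

section
/- Let (X,d) be a separable metric space, let φ : X → X be a continuous map, let ℓ be a locally finite Borel reference measure on X with respect to which φ is nonsingular, and let μ be a physical measure for φ with open neighbourhood U of its support. Suppose the Borel probability measure ν is absolutely continuous with respect to ℓ and ν(U) = 1. Then (1/T) Σ_{t=0}^{T-1} φ^t_*ν → μ in the weak topology on P(X) as T → ∞. -/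
/-!
Pushing `ν` forward and averaging commutes with integration: against a bounded continuous `f`,
the Cesàro average of the `φ^t_* ν` integrates to `∫ A_T f dν`, where `A_T f` is the Birkhoff
average of `f`. For `x` in the basin of `μ`, `A_T f x = ∫ f d(empirical measure)` tends to
`∫ f dμ`, and the basin has full `ν`-measure because `ν ≪ ℓ` and `ν` lives on `U`. Since
`|A_T f| ≤ ‖f‖`, dominated convergence concludes.
-/

open MeasureTheory Filter Topology ENNReal

noncomputable section

/-- Cesàro average `(1/(T+1)) ∑_{t=0}^{T} s t` of a sequence of probability measures. -/
def avgPM {α : Type*} [MeasurableSpace α] (s : ℕ → ProbabilityMeasure α) (T : ℕ) :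
    ProbabilityMeasure α :=
  ⟨((T + 1 : ℕ) : ℝ≥0∞)⁻¹ • ∑ t ∈ Finset.range (T + 1), (s t : Measure α), by
    constructor
    simp only [Measure.smul_apply, Measure.finset_sum_apply, measure_univ, Finset.sum_const,
      Finset.card_range, nsmul_eq_mul, mul_one, smul_eq_mul]
    rw [ENNReal.inv_mul_cancel] <;> simp⟩

/-- The Dirac probability measure at a point. -/
def diracPM {α : Type*} [MeasurableSpace α] (x : α) : ProbabilityMeasure α :=
  ⟨Measure.dirac x, inferInstance⟩

/-- Empirical measure `(1/(T+1)) ∑_{t=0}^{T} δ_{f^t(x)}`. -/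
def empMeas {α : Type*} [MeasurableSpace α] (f : α → α) (x : α) (T : ℕ) :
    ProbabilityMeasure α :=
  avgPM (fun t => diracPM (f^[t] x)) T

/-- Basin of a probability measure: points whose empirical measures converge weakly to `μ`. -/
def mBasin {α : Type*} [TopologicalSpace α] [MeasurableSpace α] [OpensMeasurableSpace α]
    (f : α → α) (μ : ProbabilityMeasure α) : Set α :=
  {x | Tendsto (fun T : ℕ => empMeas f x T) atTop (𝓝 μ)}

/-- Support of a measure: points all of whose open neighbourhoods have positive measure. -/
def msupport {α : Type*} [TopologicalSpace α] [MeasurableSpace α] (m : Measure α) : Set α :=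
  {x | ∀ u : Set α, IsOpen u → x ∈ u → m u ≠ 0}

theorem norm_birkhoffAverage_le {α E : Type*} [NormedAddCommGroup E] [NormedSpace ℝ E]
    (f : α → α) {g : α → E} {C : ℝ} (hg : ∀ y, ‖g y‖ ≤ C) (n : ℕ) (x : α) :
    ‖birkhoffAverage ℝ f g n x‖ ≤ C := by
  have hsum : ‖birkhoffSum f g n x‖ ≤ n * C := by
    simpa [birkhoffSum] using norm_sum_le_of_le (Finset.range n) fun k _ => hg (f^[k] x)
  rw [birkhoffAverage, norm_smul, norm_inv, Real.norm_natCast]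
  rcases n.eq_zero_or_pos with rfl | hn
  · simpa using (norm_nonneg _).trans (hg x)
  · rwa [inv_mul_le_iff₀ (by exact_mod_cast hn)]

theorem measurable_birkhoffAverage {α : Type*} [MeasurableSpace α] {f : α → α} {g : α → ℝ}
    (hf : Measurable f) (hg : Measurable g) (n : ℕ) : Measurable (birkhoffAverage ℝ f g n) :=
  (Finset.measurable_sum (Finset.range n) fun k _ => hg.comp (hf.iterate k)).const_smul (n : ℝ)⁻¹

open scoped BoundedContinuousFunction

section ProbabilityMeasure

variable {X : Type*} [MeasurableSpace X]

theorem integral_avgPM (s : ℕ → ProbabilityMeasure X) (T : ℕ) {f : X → ℝ}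
    (hf : ∀ t, Integrable f (s t)) :
    ∫ x, f x ∂(avgPM s T : Measure X)
      = ((T + 1 : ℕ) : ℝ)⁻¹ • ∑ t ∈ Finset.range (T + 1), ∫ x, f x ∂(s t : Measure X) := by
  change ∫ x, f x ∂(((T + 1 : ℕ) : ℝ≥0∞)⁻¹ • ∑ t ∈ Finset.range (T + 1), (s t : Measure X)) = _
  rw [integral_smul_measure, integral_finsetSum_measure fun t _ => hf t, toReal_inv,
    toReal_natCast]

theorem integral_empMeas {f : X → ℝ} (hf : StronglyMeasurable f) (φ : X → X) (x : X) (T : ℕ) :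
    ∫ y, f y ∂(empMeas φ x T : Measure X) = birkhoffAverage ℝ φ f (T + 1) x := by
  rw [empMeas, integral_avgPM _ _ fun t => integrable_dirac' hf enorm_lt_top]
  exact congrArg _ (Finset.sum_congr rfl fun t _ => integral_dirac' f _ hf)

theorem integral_pushPM {Y : Type*} [MeasurableSpace Y] {g : X → Y} (hg : Measurable g)
    (ν : ProbabilityMeasure X) {f : Y → ℝ} (hf : AEStronglyMeasurable f ((ν : Measure X).map g)) :
    ∫ y, f y ∂(pushPM g hg ν : Measure Y) = ∫ x, f (g x) ∂(ν : Measure X) :=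
  integral_map hg.aemeasurable hf

variable [TopologicalSpace X] [OpensMeasurableSpace X]

theorem integral_avgPM_pushPM_iterate {φ : X → X} (hφ : Measurable φ)
    (ν : ProbabilityMeasure X) (f : X →ᵇ ℝ) (T : ℕ) :
    ∫ x, f x ∂(avgPM (fun t => pushPM (φ^[t]) (hφ.iterate t) ν) T : Measure X)
      = ∫ x, birkhoffAverage ℝ φ f (T + 1) x ∂(ν : Measure X) := by
  have hcomp : ∀ t, Integrable (fun x => f (φ^[t] x)) (ν : Measure X) := fun t =>
    .of_bound (f.continuous.measurable.comp (hφ.iterate t)).aestronglyMeasurable ‖f‖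
      (.of_forall fun x => f.norm_coe_le_norm _)
  simp only [integral_avgPM _ _ fun t => f.integrable _,
    integral_pushPM _ _ f.continuous.aestronglyMeasurable, birkhoffAverage, birkhoffSum,
    integral_smul, integral_finsetSum _ fun t _ => hcomp t]

theorem tendsto_avgPM_pushPM_of_ae_mem_mBasin {φ : X → X} (hφ : Measurable φ)
    {μ ν : ProbabilityMeasure X} (hν : ∀ᵐ x ∂(ν : Measure X), x ∈ mBasin φ μ) :
    Tendsto (fun T => avgPM (fun t => pushPM (φ^[t]) (hφ.iterate t) ν) T) atTop (𝓝 μ) := by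
  refine ProbabilityMeasure.tendsto_iff_forall_integral_tendsto.2 fun f => ?_
  have hf := f.continuous.measurable.stronglyMeasurable
  have hlim : ∀ᵐ x ∂(ν : Measure X), Tendsto (fun T => birkhoffAverage ℝ φ f (T + 1) x) atTop
      (𝓝 (∫ y, f y ∂(μ : Measure X))) := by
    filter_upwards [hν] with x hx
    simpa only [integral_empMeas hf] using
      ProbabilityMeasure.tendsto_iff_forall_integral_tendsto.1 hx f
  have hmeas : ∀ T, AEStronglyMeasurable (birkhoffAverage ℝ φ f (T + 1)) (ν : Measure X) :=
    fun T => (measurable_birkhoffAverage hφ f.continuous.measurable _).aestronglyMeasurable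
  rw [tendsto_congr (integral_avgPM_pushPM_iterate hφ ν f)]
  simpa only [integral_const, probReal_univ, one_smul] using
    tendsto_integral_of_dominated_convergence (fun _ => ‖f‖) hmeas (integrable_const _)
      (fun T => .of_forall (norm_birkhoffAverage_le φ f.norm_coe_le_norm _)) hlim

end ProbabilityMeasure

theorem ae_mem_of_absolutelyContinuous_of_measure_diff_eq_zero {α : Type*} [MeasurableSpace α]
    {ν ℓ : Measure α} [IsProbabilityMeasure ν] {U B : Set α} (hU : MeasurableSet U)
    (hνU : ν U = 1) (hνℓ : ν ≪ ℓ) (hB : ℓ (U \ B) = 0) : ∀ᵐ x ∂ν, x ∈ B := by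
  have hU_ae : ∀ᵐ x ∂ν, x ∈ U := (prob_compl_eq_zero_iff hU).2 hνU
  have hB_ae : ∀ᵐ x ∂ν, x ∈ U → x ∈ B := by
    refine hνℓ.ae_le (measure_eq_zero_iff_ae_notMem.1 hB |>.mono fun x hx hxU => ?_)
    by_contra hxB
    exact hx ⟨hxU, hxB⟩
  filter_upwards [hU_ae, hB_ae] with x hxU hxB using hxB hxU

theorem statement16_general {X : Type*} [MetricSpace X]
    [MeasurableSpace X] [BorelSpace X]
    (φ : X → X) (hφ : Continuous φ)
    (ℓ : Measure X)
    (μ : ProbabilityMeasure X) (U : Set X)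
    (hUopen : IsOpen U)
    (hphys : ℓ (U \ mBasin φ μ) = 0)
    (ν : ProbabilityMeasure X)
    (habs : (ν : Measure X) ≪ ℓ) (hνU : (ν : Measure X) U = 1) :
    Tendsto (fun T : ℕ => avgPM (fun t => pushPM (φ^[t]) (hφ.measurable.iterate t) ν) T)
      atTop (𝓝 μ) :=
  tendsto_avgPM_pushPM_of_ae_mem_mBasin hφ.measurable <|
    ae_mem_of_absolutelyContinuous_of_measure_diff_eq_zero hUopen.measurableSet hνU habs hphys

/-- For a continuous map `φ`, nonsingular w.r.t. a locally finite reference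
measure `ℓ`, with physical measure `μ` (with open neighbourhood `U` of its support), and a Borel
probability measure `ν ≪ ℓ` with `ν(U) = 1`, the Cesàro averages `(1/T) ∑_{t<T} φ^t_*ν` converge
weakly to `μ`. -/
theorem statement16 {X : Type*} [MetricSpace X] [TopologicalSpace.SeparableSpace X]
    [MeasurableSpace X] [BorelSpace X]
    (φ : X → X) (hφ : Continuous φ)
    (ℓ : Measure X) [IsLocallyFiniteMeasure ℓ]
    (hns : ℓ.map φ ≪ ℓ)
    (μ : ProbabilityMeasure X) (U : Set X)
    (hUopen : IsOpen U) (hUsupp : msupport (μ : Measure X) ⊆ U)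
    (hcompact : IsCompact (msupport (μ : Measure X)))
    (hphys : ℓ (U \ mBasin φ μ) = 0)
    (ν : ProbabilityMeasure X)
    (habs : (ν : Measure X) ≪ ℓ) (hνU : (ν : Measure X) U = 1) :
    Tendsto (fun T : ℕ => avgPM (fun t => pushPM (φ^[t]) (hφ.measurable.iterate t) ν) T)
      atTop (𝓝 μ) :=
  statement16_general φ hφ ℓ μ U hUopen hphys ν habs hνU

end
end

section
/- Let X be a smooth compact manifold with metric d and let φ, φ̂ ∈ Diff¹(X) be topologically conjugate by a homeomorphism g : X → X, i.e. g ∘ φ = φ̂ ∘ g. Let μ be a φ-invariant Borel probability measure and let d_P be a metric metrizing the weak topology on P(X). Then for any x ∈ Basin_φ(μ) ∩ g(Basin_φ(μ)), limsup_{T→∞} d_P( (1/T) Σ_{t=0}^{T-1} δ_{φ^t(x)}, (1/T) Σ_{t=0}^{T-1} δ_{φ̂^t(x)} ) ≤ d_P(μ, g_*μ). -/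
open MeasureTheory Filter Topology ENNReal

noncomputable section

/-!
Conjugacy carries orbits of `φ` to orbits of `φ̂`, so the `φ̂`-empirical measures at `g y` are the
push-forwards by `g` of the `φ`-empirical measures at `y`; since push-forward by a continuous map
is weakly continuous, `g` maps `Basin_φ(μ)` into `Basin_φ̂(g_*μ)`. At `x ∈ Basin_φ(μ) ∩ g(Basin_φ(μ))`
the two sequences of empirical measures therefore converge to `μ` and `g_*μ`, and a metric
compatible with the topology is continuous, so the limsup is in fact a limit equal to `d_P(μ, g_*μ)`.
-/

theorem tendsto_dist_of_isOpen_iff {Y ι : Type*} [TopologicalSpace Y] (d : Y → Y → ℝ)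
    (d_self : ∀ a, d a a = 0) (d_comm : ∀ a b, d a b = d b a)
    (d_triangle : ∀ a b c, d a c ≤ d a b + d b c)
    (isOpen_iff : ∀ s : Set Y, IsOpen s ↔ ∀ a ∈ s, ∃ ε > (0 : ℝ), ∀ b, d a b < ε → b ∈ s)
    {l : Filter ι} {u v : ι → Y} {a b : Y} (hu : Tendsto u l (𝓝 a)) (hv : Tendsto v l (𝓝 b)) :
    Tendsto (fun i => d (u i) (v i)) l (𝓝 (d a b)) :=
  letI := PseudoMetricSpace.ofDistTopology d d_self d_comm d_triangle isOpen_iff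
  hu.dist hv

section PushForward

variable {α β : Type*} [MeasurableSpace α] [MeasurableSpace β] {f : α → β} (hf : Measurable f)

theorem pushPM_diracPM (x : α) : pushPM f hf (diracPM x) = diracPM (f x) :=
  Subtype.ext (Measure.map_dirac' hf x)

theorem pushPM_avgPM (s : ℕ → ProbabilityMeasure α) (T : ℕ) :
    pushPM f hf (avgPM s T) = avgPM (fun t => pushPM f hf (s t)) T := by
  apply Subtype.ext
  change Measure.map f (_ • ∑ t ∈ Finset.range (T + 1), (s t : Measure α)) =
    _ • ∑ t ∈ Finset.range (T + 1), Measure.map f (s t : Measure α)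
  rw [Measure.map_smul, Measure.map_finset_sum hf.aemeasurable]

theorem Function.Semiconj.empMeas_eq_pushPM {fa : α → α} {fb : β → β} (h : Semiconj f fa fb)
    (x : α) (T : ℕ) : empMeas fb (f x) T = pushPM f hf (empMeas fa x T) := by
  simp only [empMeas, pushPM_avgPM, pushPM_diracPM, (h.iterate_right _).eq]

end PushForward

section Topological

variable {α β : Type*} [TopologicalSpace α] [MeasurableSpace α] [OpensMeasurableSpace α]
  [TopologicalSpace β] [MeasurableSpace β] [BorelSpace β] {f : α → β}

theorem continuous_pushPM (hf : Continuous f) : Continuous (pushPM f hf.measurable) :=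
  ProbabilityMeasure.continuous_map hf

theorem Function.Semiconj.mapsTo_mBasin {fa : α → α} {fb : β → β} (h : Semiconj f fa fb)
    (hf : Continuous f) (μ : ProbabilityMeasure α) :
    Set.MapsTo f (mBasin fa μ) (mBasin fb (pushPM f hf.measurable μ)) := fun x hx => by
  simpa only [mBasin, Set.mem_ofPred_eq, Function.comp_def,
    h.empMeas_eq_pushPM hf.measurable] using ((continuous_pushPM hf).tendsto μ).comp hx

end Topological

theorem statement19_general
    {X : Type*} [MetricSpace X] [MeasurableSpace X] [BorelSpace X]
    -- `φ, φ̂ ∈ Diff¹(X)`, conjugate by the homeomorphism `g`: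
    (φ φh g : X ≃ₜ X)
    (hconj : ∀ x, g (φ x) = φh (g x))
    -- `μ` is a `φ`-invariant probability measure:
    (μ : ProbabilityMeasure X)
    -- `dP` is a metric on `P(X)` metrizing the weak topology:
    (dP : ProbabilityMeasure X → ProbabilityMeasure X → ℝ)
    (hdP_symm : ∀ a b, dP a b = dP b a)
    (hdP_tri : ∀ a b c, dP a c ≤ dP a b + dP b c)
    (hdP_eq : ∀ a b, dP a b = 0 ↔ a = b)
    (hdP_top : ∀ s : Set (ProbabilityMeasure X),
      IsOpen s ↔ ∀ a ∈ s, ∃ ε > (0 : ℝ), ∀ b, dP a b < ε → b ∈ s) :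
    ∀ x ∈ mBasin ⇑φ μ ∩ ⇑g '' mBasin ⇑φ μ,
      Filter.limsup (fun T : ℕ => dP (empMeas ⇑φ x T) (empMeas ⇑φh x T)) atTop
        ≤ dP μ (pushPM ⇑g g.continuous.measurable μ) := by
  rintro _ ⟨hφ_basin, y, hy, rfl⟩
  have hφh_basin : g y ∈ mBasin φh (pushPM g g.continuous.measurable μ) :=
    Function.Semiconj.mapsTo_mBasin hconj g.continuous μ hy
  exact (tendsto_dist_of_isOpen_iff dP (fun a => (hdP_eq a a).2 rfl) hdP_symm hdP_tri hdP_top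
    hφ_basin hφh_basin).limsup_eq.le

/-- For topologically conjugate `C¹` diffeomorphisms `φ, φ̂` of a smooth compact
manifold and a `φ`-invariant measure `μ`, the empirical measures along the `φ`- and `φ̂`-orbits of
any `x ∈ Basin_φ(μ) ∩ g(Basin_φ(μ))` stay asymptotically within `dP(μ, g_*μ)` of each other. -/
theorem statement19 {E : Type*} [NormedAddCommGroup E] [NormedSpace ℝ E]
    {H : Type*} [TopologicalSpace H] (I : ModelWithCorners ℝ E H)
    {X : Type*} [MetricSpace X] [CompactSpace X] [ChartedSpace H X]
    [IsManifold I ((⊤ : ℕ∞) : WithTop ℕ∞) X] [MeasurableSpace X] [BorelSpace X]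
    -- `φ, φ̂ ∈ Diff¹(X)`, conjugate by the homeomorphism `g`:
    (φ φh g : X ≃ₜ X)
    (hφ : ContMDiff I I 1 ⇑φ) (hφinv : ContMDiff I I 1 ⇑φ.symm)
    (hφh : ContMDiff I I 1 ⇑φh) (hφhinv : ContMDiff I I 1 ⇑φh.symm)
    (hconj : ∀ x, g (φ x) = φh (g x))
    -- `μ` is a `φ`-invariant probability measure:
    (μ : ProbabilityMeasure X) (hinv : (μ : Measure X).map ⇑φ = (μ : Measure X))
    -- `dP` is a metric on `P(X)` metrizing the weak topology:
    (dP : ProbabilityMeasure X → ProbabilityMeasure X → ℝ)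
    (hdP_symm : ∀ a b, dP a b = dP b a)
    (hdP_tri : ∀ a b c, dP a c ≤ dP a b + dP b c)
    (hdP_eq : ∀ a b, dP a b = 0 ↔ a = b)
    (hdP_top : ∀ s : Set (ProbabilityMeasure X),
      IsOpen s ↔ ∀ a ∈ s, ∃ ε > (0 : ℝ), ∀ b, dP a b < ε → b ∈ s) :
    ∀ x ∈ mBasin ⇑φ μ ∩ ⇑g '' mBasin ⇑φ μ,
      Filter.limsup (fun T : ℕ => dP (empMeas ⇑φ x T) (empMeas ⇑φh x T)) atTop
        ≤ dP μ (pushPM ⇑g g.continuous.measurable μ) :=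
  statement19_general φ φh g hconj μ dP hdP_symm hdP_tri hdP_eq hdP_top

end
end
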